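/- Let P_1,...,P_n be real polynomials with deg P_i = d_i, and 0 < d < min{d_1,...,d_n}. If N_{d-1}(P_1,...,P_n) is rank-deficient (rank strictly less than its number of columns), then deg(gcd(P_1,...,P_n)) ≥ d. -/

import Mathlib

open Polynomial Finset

/-- Entry formula for the convolution (Toeplitz) matrix of a polynomial `P`
regarded as having degree `m`: column `c` carries the coefficient vector of `P`
(in degree-descending order) shifted down by `c`. -/
noncomputable def convEntry (P : ℝ[X]) (m r c : ℕ) : ℝ :=
  if c ≤ r ∧ r ≤ c + m then P.coeff (m + c - r) else 0

/-- The convolution matrix `C_j(P)` of a polynomial `P` of degree `m`: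
it has `m + j + 1` rows and `j + 1` columns, and `C_j(P) · h` is the
coefficient vector (degree-descending) of `H · P` when `h` is the
coefficient vector of a polynomial `H` of degree at most `j`. -/
noncomputable def convMat (P : ℝ[X]) (m j : ℕ) : Matrix (Fin (m + j + 1)) (Fin (j + 1)) ℝ :=
  fun r c => convEntry P m r c

/-- The `k`-th generalized subresultant matrix `N_k(P_1, ..., P_n)` (Rupprecht's
formulation): for `i = 2, ..., n`, the `i`-th block row is
`( C_{d_1-1-k}(P_i), 0, ..., 0, C_{d_i-1-k}(P_1), 0, ..., 0 )` with
`C_{d_i-1-k}(P_1)` in the `i`-th block column.  The block row for `i = 0` is empty. -/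
noncomputable def genSubres {n : ℕ} [NeZero n] (P : Fin n → ℝ[X]) (d : Fin n → ℕ) (k : ℕ) :
    Matrix ((i : Fin n) × Fin (if i = 0 then 0 else d 0 + d i - k))
           ((j : Fin n) × Fin (d j - k)) ℝ :=
  fun r c =>
    if c.1 = 0 then convEntry (P r.1) (d r.1) r.2 c.2
    else if c.1 = r.1 then convEntry (P 0) (d 0) r.2 c.2
    else 0

/-- The squared 2-norm of the coefficient vector of a polynomial. -/
noncomputable def polyNormSq (Q : ℝ[X]) : ℝ :=
  ∑ j ∈ Finset.range (Q.natDegree + 1), (Q.coeff j) ^ 2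

/-!
A nonzero kernel vector of `N_{d-1}` splits into blocks `(h_1, …, h_n)`; reading each block as the
coefficient vector of a polynomial `H_j` with `deg H_j < d_j - d + 1`, the block row `i` of the
kernel equation says `H_1 P_i + H_i P_1 = 0`. Then `H_1 ≠ 0` (otherwise every `H_i P_1 = 0`, so
the vector vanishes), and `P_1 ∣ H_1 P_i` for all `i`. Dividing out `c = gcd(H_1, P_1)`, say
`H_1 = c a` and `P_1 = c b` with `a, b` coprime, gives `b ∣ P_i` for every `i`, hence
`b ∣ gcd(P_1, …, P_n)` and `deg gcd ≥ deg b = d_1 - deg c ≥ d_1 - deg H_1 ≥ d`.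
-/

open Matrix

theorem Matrix.exists_mulVec_eq_zero_of_rank_lt {m n K : Type*} [Fintype n] [Field K]
    (A : Matrix m n K) (h : A.rank < Fintype.card n) : ∃ v ≠ 0, A *ᵥ v = 0 := by
  by_contra! hA
  have hinj : Function.Injective A.mulVecLin := by
    rw [← LinearMap.ker_eq_bot, Matrix.ker_mulVecLin_eq_bot_iff]
    exact fun v hv => by_contra fun hv0 => hA v hv0 hv
  rw [Matrix.rank, LinearMap.finrank_range_of_inj hinj, Module.finrank_fintype_fun_eq_card] at h
  exact h.false

theorem natDegree_le_natDegree_add_natDegree_gcd {K ι : Type*} [Field K] [DecidableEq K]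
    {s : Finset ι} {P : ι → K[X]} {i₀ : ι} (hi₀ : i₀ ∈ s) (hP : P i₀ ≠ 0) {H : K[X]}
    (hH : H ≠ 0) (hdvd : ∀ i ∈ s, P i₀ ∣ H * P i) :
    (P i₀).natDegree ≤ H.natDegree + (s.gcd P).natDegree := by
  obtain ⟨a, b, c, hab, rfl, hcb⟩ := UniqueFactorizationMonoid.exists_reduced_factors H hH (P i₀)
  have hc : c ≠ 0 := left_ne_zero_of_mul hH
  have hb : b ≠ 0 := right_ne_zero_of_mul (hcb ▸ hP)
  have hbgcd : b ∣ s.gcd P := Finset.dvd_gcd fun i hi => by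
    have hca := hdvd i hi
    rw [← hcb, mul_assoc, mul_dvd_mul_iff_left hc] at hca
    exact hab.symm.dvd_of_dvd_mul_left hca
  have hgcd : s.gcd P ≠ 0 := fun h => hP (Finset.gcd_eq_zero_iff.1 h i₀ hi₀)
  rw [← hcb, natDegree_mul hc hb]
  exact add_le_add (natDegree_le_of_dvd (dvd_mul_right c a) hH) (natDegree_le_of_dvd hbgcd hgcd)

section CoeffsDesc

variable {R : Type*} [Semiring R] {D : ℕ}

/-- The polynomial of degree `< D` whose coefficients, listed from degree `D - 1` down to `0`,
are `w 0, …, w (D - 1)`: the unknown vectors of the convolution matrices are read this way. -/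
noncomputable def ofCoeffsDesc (w : Fin D → R) : R[X] :=
  ∑ c : Fin D, monomial (D - 1 - c) (w c)

theorem coeff_ofCoeffsDesc (w : Fin D → R) (c : Fin D) :
    (ofCoeffsDesc w).coeff (D - 1 - c) = w c := by
  rw [ofCoeffsDesc, finsetSum_coeff, Finset.sum_eq_single c]
  · simp
  · intro b _ hb
    rw [coeff_monomial, if_neg]
    exact fun h => hb (Fin.ext (by omega))
  · simp

theorem ofCoeffsDesc_eq_zero {w : Fin D → R} : ofCoeffsDesc w = 0 ↔ w = 0 := by
  refine ⟨fun h => funext fun c => ?_, fun h => by simp [ofCoeffsDesc, h]⟩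
  rw [← coeff_ofCoeffsDesc w c, h, coeff_zero, Pi.zero_apply]

theorem natDegree_ofCoeffsDesc_le (w : Fin D → R) : (ofCoeffsDesc w).natDegree ≤ D - 1 :=
  natDegree_sum_le_of_forall_le _ _ fun c _ => (natDegree_monomial_le _).trans (by omega)

theorem coeff_ofCoeffsDesc_mul (w : Fin D → R) (Q : R[X]) (s : ℕ) :
    (ofCoeffsDesc w * Q).coeff s
      = ∑ c : Fin D, if D - 1 - c ≤ s then w c * Q.coeff (s - (D - 1 - c)) else 0 := by
  rw [ofCoeffsDesc, Finset.sum_mul, finsetSum_coeff]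
  refine Finset.sum_congr rfl fun c _ => ?_
  rw [← C_mul_X_pow_eq_monomial, mul_assoc, coeff_C_mul, X_pow_mul, coeff_mul_X_pow',
    mul_ite, mul_zero]

variable {ι : Type*} {m : ι → ℕ}

noncomputable def blockPoly (v : (j : ι) × Fin (m j) → R) (j : ι) : R[X] :=
  ofCoeffsDesc fun c => v ⟨j, c⟩

theorem eq_zero_of_forall_blockPoly_eq_zero {v : (j : ι) × Fin (m j) → R}
    (h : ∀ j, blockPoly v j = 0) : v = 0 :=
  funext fun ⟨j, c⟩ => congrFun (ofCoeffsDesc_eq_zero.1 (h j)) c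

theorem natDegree_blockPoly_le (v : (j : ι) × Fin (m j) → R) (j : ι) :
    (blockPoly v j).natDegree ≤ m j - 1 :=
  natDegree_ofCoeffsDesc_le _

end CoeffsDesc

/-- `C_{D-1}(Q) · w` is the coefficient vector of `ofCoeffsDesc w * Q`, in degree-descending order:
row `r` holds the coefficient of `X ^ s` with `r + s = D + m - 1`. -/
theorem coeff_ofCoeffsDesc_mul_eq_sum_convEntry {D m r s : ℕ} (w : Fin D → ℝ) {Q : ℝ[X]}
    (hQ : Q.natDegree = m) (hrs : r + s + 1 = D + m) :
    (ofCoeffsDesc w * Q).coeff s = ∑ c : Fin D, convEntry Q m r c * w c := by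
  rw [coeff_ofCoeffsDesc_mul]
  refine Finset.sum_congr rfl fun c _ => ?_
  have hc := c.2
  unfold convEntry
  split_ifs with h₁ h₂ h₂
  · rw [mul_comm]; congr 2; omega
  · rw [coeff_eq_zero_of_natDegree_lt (by omega), mul_zero, zero_mul]
  · omega
  · rw [zero_mul]


section GenSubres

variable {n : ℕ} [NeZero n] (P : Fin n → ℝ[X]) (d : Fin n → ℕ) (k : ℕ)

theorem genSubres_mulVec_apply (v : (j : Fin n) × Fin (d j - k) → ℝ) {i : Fin n} (hi : i ≠ 0)
    (r : Fin (if i = 0 then 0 else d 0 + d i - k)) :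
    (genSubres P d k *ᵥ v) ⟨i, r⟩
      = ∑ c : Fin (d 0 - k), convEntry (P i) (d i) r c * v ⟨0, c⟩
        + ∑ c : Fin (d i - k), convEntry (P 0) (d 0) r c * v ⟨i, c⟩ := by
  rw [Matrix.mulVec, dotProduct, Fintype.sum_sigma,
    Finset.sum_eq_add 0 i hi.symm ?_ (by simp) (by simp)]
  · simp [genSubres, hi]
  · intro j _ hj
    simp [genSubres, hj.1, hj.2]

theorem blockPoly_mul_add_eq_zero_of_mulVec_genSubres_eq_zero
    (hdeg : ∀ i, (P i).natDegree = d i) (hk : ∀ i, k < d i)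
    {v : (j : Fin n) × Fin (d j - k) → ℝ} (hv : genSubres P d k *ᵥ v = 0) {i : Fin n}
    (hi : i ≠ 0) :
    blockPoly v 0 * P i + blockPoly v i * P 0 = 0 := by
  have hk0 := hk 0
  have hki := hk i
  ext s
  rw [coeff_add, coeff_zero]
  by_cases hs : s < d 0 + d i - k
  · have hr : d 0 + d i - k - 1 - s < if i = 0 then 0 else d 0 + d i - k := by
      rw [if_neg hi]; omega
    have hrow := genSubres_mulVec_apply P d k v hi ⟨_, hr⟩
    rw [hv, Pi.zero_apply] at hrow
    rw [blockPoly, blockPoly,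
      coeff_ofCoeffsDesc_mul_eq_sum_convEntry (r := d 0 + d i - k - 1 - s) _ (hdeg i) (by omega),
      coeff_ofCoeffsDesc_mul_eq_sum_convEntry (r := d 0 + d i - k - 1 - s) _ (hdeg 0) (by omega),
      hrow]
  · have hdeg_lt {j l : Fin n} (hjl : d j + d l = d 0 + d i) :
        (blockPoly v j * P l).natDegree < s := by
      have := natDegree_blockPoly_le v j
      have := hk j
      have := hdeg l
      exact natDegree_mul_le.trans_lt (by omega)
    rw [coeff_eq_zero_of_natDegree_lt (hdeg_lt rfl),
      coeff_eq_zero_of_natDegree_lt (hdeg_lt (add_comm _ _)), add_zero]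

end GenSubres

theorem stmt12_general {n : ℕ} [NeZero n] (P : Fin n → ℝ[X]) (d : Fin n → ℕ)
    (dd : ℕ) (hdd : ∀ i, dd < d i)
    (hdeg : ∀ i, (P i).natDegree = d i)
    (hrank : (genSubres P d (dd - 1)).rank
      < Fintype.card ((j : Fin n) × Fin (d j - (dd - 1)))) :
    dd ≤ (Finset.univ.gcd P).natDegree := by
  obtain ⟨v, hv0, hv⟩ := (genSubres P d (dd - 1)).exists_mulVec_eq_zero_of_rank_lt hrank
  have hP0 : P 0 ≠ 0 := ne_zero_of_natDegree_gt ((hdeg 0).symm ▸ hdd 0)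
  have hcross {i : Fin n} (hi : i ≠ 0) : blockPoly v 0 * P i + blockPoly v i * P 0 = 0 :=
    blockPoly_mul_add_eq_zero_of_mulVec_genSubres_eq_zero P d _ hdeg
      (fun i => (Nat.sub_le dd 1).trans_lt (hdd i)) hv hi
  have hH0 : blockPoly v 0 ≠ 0 := by
    refine fun h0 => hv0 (eq_zero_of_forall_blockPoly_eq_zero fun j => ?_)
    by_cases hj : j = 0
    · rwa [hj]
    · simpa [h0, hP0] using hcross hj
  have hdvd (i : Fin n) (_ : i ∈ Finset.univ) : P 0 ∣ blockPoly v 0 * P i := by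
    by_cases hi : i = 0
    · rw [hi]; exact dvd_mul_left _ _
    · exact ⟨-blockPoly v i, by linear_combination hcross hi⟩
  have hgcd := natDegree_le_natDegree_add_natDegree_gcd (Finset.mem_univ 0) hP0 hH0 hdvd
  have hH0deg := natDegree_blockPoly_le v 0
  have hP0deg := hdeg 0
  have hd0 := hdd 0
  omega

/-- if `N_{d-1}(P_1, ..., P_n)` is rank-deficient (its rank is
strictly less than its number of columns), then `deg (gcd (P_1, ..., P_n)) ≥ d`. -/
theorem stmt12 {n : ℕ} [NeZero n] (hn : 2 ≤ n) (P : Fin n → ℝ[X]) (d : Fin n → ℕ)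
    (dd : ℕ) (hddpos : 0 < dd) (hdd : ∀ i, dd < d i)
    (hdeg : ∀ i, (P i).natDegree = d i)
    (hrank : (genSubres P d (dd - 1)).rank
      < Fintype.card ((j : Fin n) × Fin (d j - (dd - 1)))) :
    dd ≤ (Finset.univ.gcd P).natDegree :=
  stmt12_general P d dd hdd hdeg hrank
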